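/- arXiv:2101.10050 — 4 statements merged into one kernel-verified Lean document; each statement's English description precedes it below -/
import Mathlib

section
/- Every eigenvalue of the parametrised graph shift operator γ(A,S) is real. Precisely: under the stated hypotheses, every complex eigenvalue μ of the matrix γ(A,S) (viewed as a matrix over ℂ) has zero imaginary part. -/
open Matrix BigOperators Finset

/-- Degree of node `i`: the `i`-th row sum of the adjacency matrix `A`. -/
noncomputable def adjDeg {n : ℕ} (A : Matrix (Fin n) (Fin n) ℝ) (i : Fin n) : ℝ :=
  ∑ j, A i j

/-- The diagonal matrix `D_a^e` with diagonal entries `(d_i + a) ^ e` (real powers). -/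
noncomputable def Dpow {n : ℕ} (A : Matrix (Fin n) (Fin n) ℝ) (a e : ℝ) :
    Matrix (Fin n) (Fin n) ℝ :=
  Matrix.diagonal (fun i => (adjDeg A i + a) ^ e)

/-- The parametrised graph shift operator
`γ(A,S) = m1·D_a^{e1} + m2·D_a^{e2}·A_a·D_a^{e3} + m3·I_n`, where `A_a = A + a·I_n`. -/
noncomputable def pgso {n : ℕ} (A : Matrix (Fin n) (Fin n) ℝ)
    (m1 m2 m3 e1 e2 e3 a : ℝ) : Matrix (Fin n) (Fin n) ℝ :=
  m1 • Dpow A a e1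
    + m2 • (Dpow A a e2 * (A + a • (1 : Matrix (Fin n) (Fin n) ℝ)) * Dpow A a e3)
    + m3 • (1 : Matrix (Fin n) (Fin n) ℝ)

lemma Dpow_mul_Dpow {n : ℕ} (A : Matrix (Fin n) (Fin n) ℝ) (a : ℝ)
    (hdeg : ∀ i, 0 < adjDeg A i + a) (x y : ℝ) :
    Dpow A a x * Dpow A a y = Dpow A a (x + y) := by
  unfold Dpow
  rw [diagonal_mul_diagonal]
  have : (fun i => (adjDeg A i + a) ^ x * (adjDeg A i + a) ^ y)
      = fun i => (adjDeg A i + a) ^ (x + y) :=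
    funext fun i => (Real.rpow_add (hdeg i) x y).symm
  rw [this]

/-- Every complex eigenvalue of the parametrised graph shift operator `γ(A,S)` has zero
imaginary part. -/
theorem pgso_eigenvalue_real
    (n : ℕ) (hn : 0 < n) (A : Matrix (Fin n) (Fin n) ℝ)
    (hsymm : A.IsSymm) (hnonneg : ∀ i j, 0 ≤ A i j)
    (m1 m2 m3 e1 e2 e3 a : ℝ) (hdeg : ∀ i, 0 < adjDeg A i + a)
    (μ : ℂ) (v : Fin n → ℂ) (hv : v ≠ 0)
    (heig : ((pgso A m1 m2 m3 e1 e2 e3 a).map Complex.ofReal).mulVec v = μ • v) :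
    μ.im = 0 := by
  classical
  have Dmul := Dpow_mul_Dpow A a hdeg
  set c : ℝ := (e3 - e2) / 2 with hc
  set s : ℝ := (e2 + e3) / 2 with hs
  set Aa : Matrix (Fin n) (Fin n) ℝ := A + a • (1 : Matrix (Fin n) (Fin n) ℝ) with hAa
  set S : Matrix (Fin n) (Fin n) ℝ :=
    m1 • Dpow A a e1 + m2 • (Dpow A a s * Aa * Dpow A a s)
      + m3 • (1 : Matrix (Fin n) (Fin n) ℝ) with hSdef
  have h1 : Dpow A a c * Dpow A a e1 = Dpow A a e1 * Dpow A a c := by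
    rw [Dmul, Dmul, add_comm]
  have hce2 : c + e2 = s := by rw [hc, hs]; ring
  have hsc : s + c = e3 := by rw [hc, hs]; ring
  have h2 : Dpow A a c * (Dpow A a e2 * Aa * Dpow A a e3)
      = Dpow A a s * Aa * Dpow A a s * Dpow A a c := by
    calc Dpow A a c * (Dpow A a e2 * Aa * Dpow A a e3)
        = (Dpow A a c * Dpow A a e2) * (Aa * Dpow A a e3) := by
          simp only [mul_assoc]
      _ = Dpow A a s * (Aa * Dpow A a e3) := by rw [Dmul, hce2]
      _ = Dpow A a s * (Aa * (Dpow A a s * Dpow A a c)) := by rw [Dmul, hsc]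
      _ = Dpow A a s * Aa * Dpow A a s * Dpow A a c := by
          rw [← mul_assoc, ← mul_assoc]
  have key : Dpow A a c * pgso A m1 m2 m3 e1 e2 e3 a = S * Dpow A a c := by
    simp only [pgso, hSdef, mul_add, add_mul, Matrix.mul_smul, Matrix.smul_mul,
      mul_one, one_mul, ← hAa, h1, h2]
  -- symmetry of S
  have hAasymm : Aaᵀ = Aa := by
    rw [hAa, transpose_add, hsymm.eq, transpose_smul, transpose_one]
  have hSsymm : Sᵀ = S := by
    rw [hSdef]
    simp only [transpose_add, transpose_smul, transpose_mul, transpose_one,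
      Dpow, diagonal_transpose, hAasymm]
    rw [mul_assoc]
  have hSij : ∀ i j, S i j = S j i := by
    intro i j
    conv_lhs => rw [← hSsymm]
    rfl
  -- complex side
  have hmap : ∀ X Y : Matrix (Fin n) (Fin n) ℝ,
      (X * Y).map Complex.ofReal = X.map Complex.ofReal * Y.map Complex.ofReal := by
    intro X Y
    exact Matrix.map_mul (f := Complex.ofRealHom)
  set Pc := (Dpow A a c).map Complex.ofReal with hPc
  set Sc := S.map Complex.ofReal with hSc
  set w : Fin n → ℂ := Pc.mulVec v with hw
  have hMw : Sc.mulVec w = μ • w := by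
    rw [hw, mulVec_mulVec, ← hmap, ← key, hmap, ← mulVec_mulVec, heig,
      Matrix.mulVec_smul]
  have hwne : w ≠ 0 := by
    intro h0
    apply hv
    funext i
    have hwi : w i = 0 := by rw [h0]; rfl
    rw [hw] at hwi
    have hPdiag : Pc = Matrix.diagonal
        (fun i => (Complex.ofReal ((adjDeg A i + a) ^ c))) := by
      rw [hPc, Dpow, Matrix.diagonal_map (by simp)]
    rw [hPdiag, mulVec_diagonal] at hwi
    have hbase : ((adjDeg A i + a) ^ c : ℝ) ≠ 0 :=
      ne_of_gt (Real.rpow_pos_of_pos (hdeg i) c)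
    rcases mul_eq_zero.mp hwi with h | h
    · exact absurd h (by exact_mod_cast hbase)
    · exact h
  -- quadratic form argument
  set q : ℂ := ∑ i, (starRingEnd ℂ) (w i) * w i with hq
  have hq_eq : q = Complex.ofReal (∑ i, Complex.normSq (w i)) := by
    rw [hq]
    push_cast
    congr 1
    funext i
    rw [mul_comm, Complex.mul_conj]
  have hqne : q ≠ 0 := by
    rw [hq_eq]
    have hex : ∃ i, w i ≠ 0 := by
      by_contra h
      push_neg at h
      exact hwne (funext h)
    obtain ⟨i, hi⟩ := hex
    have hpos : 0 < ∑ j, Complex.normSq (w j) :=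
      Finset.sum_pos' (fun j _ => Complex.normSq_nonneg _)
        ⟨i, Finset.mem_univ i, Complex.normSq_pos.mpr hi⟩
    exact_mod_cast ne_of_gt hpos
  set z : ℂ := ∑ i, (starRingEnd ℂ) (w i) * Sc.mulVec w i with hz
  have hz1 : z = μ * q := by
    rw [hz, hMw, hq, Finset.mul_sum]
    congr 1
    funext i
    simp only [Pi.smul_apply, smul_eq_mul]
    ring
  have hSreal : ∀ i j, Sc i j = Complex.ofReal (S i j) := by
    intro i j; rfl
  have hexp : z = ∑ i, ∑ j, (S i j : ℂ) * ((starRingEnd ℂ) (w i) * w j) := by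
    rw [hz]
    refine Finset.sum_congr rfl fun i _ => ?_
    simp only [mulVec, dotProduct, Finset.mul_sum]
    refine Finset.sum_congr rfl fun j _ => ?_
    rw [hSreal]
    ring
  have hz2 : (starRingEnd ℂ) z = z := by
    rw [hexp]
    simp only [map_sum, _root_.map_mul, Complex.conj_conj, Complex.conj_ofReal]
    rw [Finset.sum_comm]
    refine Finset.sum_congr rfl fun i _ => Finset.sum_congr rfl fun j _ => ?_
    rw [hSij j i]
    ring
  have hconjq : (starRingEnd ℂ) q = q := by rw [hq_eq, Complex.conj_ofReal]
  have hμq : μ * q = (starRingEnd ℂ) μ * q := by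
    conv_lhs => rw [← hz1, ← hz2, hz1]
    rw [_root_.map_mul, hconjq]
  have hμ : (starRingEnd ℂ) μ = μ := mul_right_cancel₀ hqne hμq.symm
  exact Complex.conj_eq_iff_im.mp hμ
end

section
/- The parametrised graph shift operator γ(A,S) has a set of real eigenvectors: under the stated hypotheses, there exist an invertible real matrix P and a real diagonal matrix Λ such that γ(A,S) = P·Λ·P⁻¹; in particular ℝ^n has a basis consisting of real eigenvectors of γ(A,S) with real eigenvalues. -/
/-!
Since `d_i + a > 0`, the powers `D_a^e` form a commuting group under multiplication, and
conjugating by `D_a^t` with `t = (e2 - e3) / 2` rebalances the exponents around `A_a`: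
`γ(A,S) = D_a^t · γ' · D_a^{-t}`, where `γ'` is the operator with both exponents equal to
`(e2 + e3) / 2`. As `A_a` is symmetric, so is `γ'`; the spectral theorem diagonalises it, and
`D_a^t` applied to an orthonormal eigenbasis of `γ'` is a real eigenbasis of `γ(A,S)`.
-/

open Matrix BigOperators Finset

namespace Matrix

variable {ι R : Type*} [Fintype ι] [DecidableEq ι] [CommRing R]

def IsDiagonalizable (M : Matrix ι ι R) : Prop :=
  ∃ P Λ : Matrix ι ι R, IsUnit P ∧ Λ.IsDiag ∧ M = P * Λ * P⁻¹

theorem IsDiagonalizable.conj {M Q : Matrix ι ι R} (hM : M.IsDiagonalizable) (hQ : IsUnit Q) :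
    (Q * M * Q⁻¹).IsDiagonalizable := by
  obtain ⟨P, Λ, hP, hΛ, rfl⟩ := hM
  refine ⟨Q * P, Λ, hQ.mul hP, hΛ, ?_⟩
  rw [mul_inv_rev]
  noncomm_ring

theorem IsHermitian.isDiagonalizable {𝕜 : Type*} [RCLike 𝕜] {M : Matrix ι ι 𝕜}
    (hM : M.IsHermitian) : M.IsDiagonalizable := by
  let U := hM.eigenvectorUnitary
  have hU_inv : (U : Matrix ι ι 𝕜)⁻¹ = star (U : Matrix ι ι 𝕜) :=
    inv_eq_left_inv (Unitary.coe_star_mul_self U)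
  refine ⟨U, diagonal (RCLike.ofReal ∘ hM.eigenvalues), (Unitary.toUnits U).isUnit,
    isDiag_diagonal _, ?_⟩
  rw [hU_inv]
  exact hM.spectral_theorem

end Matrix

section Dpow

variable {n : ℕ}

theorem Dpow_isHermitian (A : Matrix (Fin n) (Fin n) ℝ) (a e : ℝ) :
    (Dpow A a e).IsHermitian :=
  isHermitian_diagonal _

theorem Dpow_zero (A : Matrix (Fin n) (Fin n) ℝ) (a : ℝ) : Dpow A a 0 = 1 := by
  simp [Dpow]

variable {A : Matrix (Fin n) (Fin n) ℝ} {a : ℝ} (hdeg : ∀ i, 0 < adjDeg A i + a)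
include hdeg

theorem Dpow_add (u v : ℝ) : Dpow A a (u + v) = Dpow A a u * Dpow A a v := by
  simp only [Dpow, diagonal_mul_diagonal, Real.rpow_add (hdeg _)]

theorem Dpow_mul_Dpow_neg (e : ℝ) : Dpow A a e * Dpow A a (-e) = 1 := by
  rw [← Dpow_add hdeg, add_neg_cancel, Dpow_zero]

theorem Dpow_neg (e : ℝ) : Dpow A a (-e) = (Dpow A a e)⁻¹ :=
  (inv_eq_right_inv (Dpow_mul_Dpow_neg hdeg e)).symm

theorem isUnit_Dpow (e : ℝ) : IsUnit (Dpow A a e) :=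
  IsUnit.of_mul_eq_one _ (Dpow_mul_Dpow_neg hdeg e)

end Dpow

theorem pgso_isHermitian {n : ℕ} {A : Matrix (Fin n) (Fin n) ℝ} (hsymm : A.IsSymm)
    (m1 m2 m3 e1 e a : ℝ) : (pgso A m1 m2 m3 e1 e e a).IsHermitian := by
  have hAa : (A + a • (1 : Matrix (Fin n) (Fin n) ℝ)).IsHermitian :=
    (isHermitian_iff_isSymm.mpr hsymm).add (isHermitian_one.smul (IsSelfAdjoint.all a))
  have hmid := isHermitian_mul_mul_conjTranspose (Dpow A a e) hAa
  rw [(Dpow_isHermitian A a e).eq] at hmid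
  exact ((Dpow_isHermitian A a e1).smul (IsSelfAdjoint.all m1)).add
    (hmid.smul (IsSelfAdjoint.all m2)) |>.add (isHermitian_one.smul (IsSelfAdjoint.all m3))

theorem pgso_eq_Dpow_mul_pgso_mul_inv {n : ℕ} {A : Matrix (Fin n) (Fin n) ℝ} {a : ℝ}
    (hdeg : ∀ i, 0 < adjDeg A i + a) (m1 m2 m3 e1 e2 e3 : ℝ) :
    pgso A m1 m2 m3 e1 e2 e3 a =
      Dpow A a ((e2 - e3) / 2) * pgso A m1 m2 m3 e1 ((e2 + e3) / 2) ((e2 + e3) / 2) a *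
        (Dpow A a ((e2 - e3) / 2))⁻¹ := by
  rw [← Dpow_neg hdeg]
  unfold pgso
  generalize A + a • (1 : Matrix (Fin n) (Fin n) ℝ) = Aa
  set t := (e2 - e3) / 2
  set m := (e2 + e3) / 2
  have h_diag : Dpow A a t * Dpow A a e1 * Dpow A a (-t) = Dpow A a e1 := by
    rw [← Dpow_add hdeg, ← Dpow_add hdeg, add_neg_cancel_comm]
  have h_adj : Dpow A a t * (Dpow A a m * Aa * Dpow A a m) * Dpow A a (-t) =
      Dpow A a e2 * Aa * Dpow A a e3 := by
    have he2 : t + m = e2 := by ring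
    have he3 : m + -t = e3 := by ring
    rw [← he2, ← he3, Dpow_add hdeg t, Dpow_add hdeg m (-t)]
    simp only [mul_assoc]
  simp only [Matrix.mul_add, Matrix.add_mul, Matrix.mul_smul, Matrix.smul_mul, mul_one, h_diag,
    h_adj, Dpow_mul_Dpow_neg hdeg]

theorem pgso_real_diagonalisable_general
    (n : ℕ) (A : Matrix (Fin n) (Fin n) ℝ)
    (hsymm : A.IsSymm)
    (m1 m2 m3 e1 e2 e3 a : ℝ) (hdeg : ∀ i, 0 < adjDeg A i + a) :
    ∃ P Λ : Matrix (Fin n) (Fin n) ℝ,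
      IsUnit P ∧ Λ.IsDiag ∧ pgso A m1 m2 m3 e1 e2 e3 a = P * Λ * P⁻¹ := by
  rw [pgso_eq_Dpow_mul_pgso_mul_inv hdeg]
  exact (pgso_isHermitian hsymm m1 m2 m3 e1 _ a).isDiagonalizable.conj (isUnit_Dpow hdeg _)

/-- The PGSO `γ(A,S)` is diagonalisable over ℝ: there exist an invertible real matrix `P`
and a real diagonal matrix `Λ` with `γ(A,S) = P·Λ·P⁻¹`. -/
theorem pgso_real_diagonalisable
    (n : ℕ) (hn : 0 < n) (A : Matrix (Fin n) (Fin n) ℝ)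
    (hsymm : A.IsSymm) (hnonneg : ∀ i j, 0 ≤ A i j)
    (m1 m2 m3 e1 e2 e3 a : ℝ) (hdeg : ∀ i, 0 < adjDeg A i + a) :
    ∃ P Λ : Matrix (Fin n) (Fin n) ℝ,
      IsUnit P ∧ Λ.IsDiag ∧ pgso A m1 m2 m3 e1 e2 e3 a = P * Λ * P⁻¹ :=
  pgso_real_diagonalisable_general n A hsymm m1 m2 m3 e1 e2 e3 a hdeg
end

section
/- Spectral support of the PGSO (Gershgorin bound): for each index i set C_i = m1·(d_i+a)^{e1} + m2·(d_i+a)^{e2+e3}·a + m3 and R_i = |m2|·(d_i+a)^{e2+e3}·d_i. Then every eigenvalue λ of γ(A,S) (all of which are real) satisfies min_{i} (C_i − R_i) ≤ λ ≤ max_{i} (C_i + R_i). -/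
open Matrix BigOperators Finset

/-- Gershgorin bound on the spectral support of the PGSO: with
`C_i = m1·(d_i+a)^{e1} + m2·(d_i+a)^{e2+e3}·a + m3` and
`R_i = |m2|·(d_i+a)^{e2+e3}·d_i`, every eigenvalue `μ` of `γ(A,S)` is real and satisfies
`min_i (C_i − R_i) ≤ μ ≤ max_i (C_i + R_i)`. -/
theorem pgso_spectral_support
    (n : ℕ) (hn : 0 < n) (A : Matrix (Fin n) (Fin n) ℝ)
    (hsymm : A.IsSymm) (hnonneg : ∀ i j, 0 ≤ A i j) (hdiag : ∀ i, A i i = 0)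
    (m1 m2 m3 e1 e2 e3 a : ℝ) (hdeg : ∀ i, 0 < adjDeg A i + a)
    (μ : ℂ) (v : Fin n → ℂ) (hv : v ≠ 0)
    (heig : ((pgso A m1 m2 m3 e1 e2 e3 a).map Complex.ofReal).mulVec v = μ • v) :
    μ.im = 0 ∧
    Finset.univ.inf' ⟨⟨0, hn⟩, Finset.mem_univ _⟩
      (fun i => (m1 * (adjDeg A i + a) ^ e1 + m2 * (adjDeg A i + a) ^ (e2 + e3) * a + m3)
        - |m2| * (adjDeg A i + a) ^ (e2 + e3) * adjDeg A i) ≤ μ.re ∧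
    μ.re ≤ Finset.univ.sup' ⟨⟨0, hn⟩, Finset.mem_univ _⟩
      (fun i => (m1 * (adjDeg A i + a) ^ e1 + m2 * (adjDeg A i + a) ^ (e2 + e3) * a + m3)
        + |m2| * (adjDeg A i + a) ^ (e2 + e3) * adjDeg A i) := by
  set d := adjDeg A with hd
  set X : Fin n → ℝ := fun i => d i + a with hX
  have hXpos : ∀ i, 0 < X i := hdeg
  have hXt : ∀ (t : ℝ) (i : Fin n), 0 < X i ^ t := fun t i => Real.rpow_pos_of_pos (hXpos i) t
  -- the value C_i
  set C : Fin n → ℝ := fun i => m1 * X i ^ e1 + m2 * X i ^ (e2 + e3) * a + m3 with hC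
  -- the similar matrix family
  set M : ℝ → Matrix (Fin n) (Fin n) ℝ :=
    fun t i j => (if i = j then C i else 0) + m2 * X i ^ (e2 + t) * A i j * X j ^ (e3 - t)
    with hM
  -- entries of pgso
  have hent : ∀ i j, pgso A m1 m2 m3 e1 e2 e3 a i j =
      (if i = j then m1 * X i ^ e1 + m3 else 0)
        + m2 * X i ^ e2 * (A i j + if i = j then a else 0) * X j ^ e3 := by
    intro i j
    simp only [pgso, Dpow, Matrix.add_apply, Matrix.smul_apply, Matrix.mul_diagonal,
      Matrix.diagonal_mul, Matrix.diagonal_apply, Matrix.one_apply, smul_eq_mul,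
      mul_ite, mul_one, mul_zero, hd, hX]
    by_cases h : i = j <;> simp [h] <;> ring
  -- key conjugation identity
  have hkey : ∀ (t : ℝ) (i j : Fin n),
      M t i j * X j ^ t = X i ^ t * pgso A m1 m2 m3 e1 e2 e3 a i j := by
    intro t i j
    rw [hent]
    by_cases h : i = j
    · subst h
      have h23 : X i ^ (e2 + e3) = X i ^ e2 * X i ^ e3 := Real.rpow_add (hXpos i) e2 e3
      simp only [hM, if_pos rfl, eq_self_iff_true, if_true, hdiag i, hC, h23, mul_zero, zero_mul, add_zero, zero_add]
      ring
    · simp only [hM, if_neg h]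
      have h3 : X j ^ (e3 - t) * X j ^ t = X j ^ e3 := by
        rw [← Real.rpow_add (hXpos j), sub_add_cancel]
      rw [Real.rpow_add (hXpos i) e2 t, ← h3]
      ring
  -- the per-row eigen-equation for pgso
  have hrow : ∀ i, ∑ j, ((pgso A m1 m2 m3 e1 e2 e3 a i j : ℝ) : ℂ) * v j = μ * v i := by
    intro i
    have := congrFun heig i
    simpa [Matrix.mulVec, dotProduct, Matrix.map_apply] using this
  -- the transported eigen-equation
  have hroweq : ∀ (t : ℝ) (i : Fin n),
      ∑ j, ((M t i j : ℝ) : ℂ) * (((X j ^ t : ℝ) : ℂ) * v j)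
        = μ * (((X i ^ t : ℝ) : ℂ) * v i) := by
    intro t i
    have : ∀ j, ((M t i j : ℝ) : ℂ) * (((X j ^ t : ℝ) : ℂ) * v j)
        = ((X i ^ t : ℝ) : ℂ) * (((pgso A m1 m2 m3 e1 e2 e3 a i j : ℝ) : ℂ) * v j) := by
      intro j
      rw [← mul_assoc, ← mul_assoc]
      congr 1
      exact_mod_cast hkey t i j
    rw [Finset.sum_congr rfl (fun j _ => this j), ← Finset.mul_sum, hrow i]
    ring
  -- the transported eigenvector is nonzero
  have hw : ∀ t : ℝ, (fun j => ((X j ^ t : ℝ) : ℂ) * v j) ≠ 0 := by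
    intro t h
    apply hv
    funext j
    have := congrFun h j
    simp only [Pi.zero_apply, mul_eq_zero] at this
    rcases this with h' | h'
    · exact absurd h' (by exact_mod_cast (hXt t j).ne')
    · exact h'
  constructor
  · -- reality via the symmetric similar matrix, t₀ = (e3 - e2)/2
    set t₀ : ℝ := (e3 - e2) / 2 with ht₀
    set u : Fin n → ℂ := fun j => ((X j ^ t₀ : ℝ) : ℂ) * v j with hu
    have hMsymm : ∀ i j, M t₀ i j = M t₀ j i := by
      intro i j
      have hA : A i j = A j i := by
        have := congrFun (congrFun hsymm i) j
        simpa [Matrix.transpose_apply] using this.symm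
      have he : e2 + t₀ = e3 - t₀ := by rw [ht₀]; ring
      simp only [hM, he, hA]
      by_cases h : i = j
      · subst h; ring
      · rw [if_neg h, if_neg (Ne.symm h)]; ring
    set N : ℝ := ∑ i, Complex.normSq (u i) with hN
    have hNpos : 0 < N := by
      rcases Function.ne_iff.mp (hw t₀) with ⟨i, hi⟩
      have : 0 < Complex.normSq (u i) := by
        rw [Complex.normSq_pos]; exact hi
      exact Finset.sum_pos' (fun j _ => Complex.normSq_nonneg _)
        ⟨i, Finset.mem_univ i, this⟩
    have hS : μ * (N : ℂ) = ∑ i, ∑ j, ((M t₀ i j : ℝ) : ℂ) * ((starRingEnd ℂ) (u i) * u j) := by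
      have : ∀ i, (starRingEnd ℂ) (u i) * (μ * u i)
          = ∑ j, ((M t₀ i j : ℝ) : ℂ) * ((starRingEnd ℂ) (u i) * u j) := by
        intro i
        rw [← hroweq t₀ i]
        rw [Finset.mul_sum]
        exact Finset.sum_congr rfl (fun j _ => by ring)
      have hterm : ∀ i, (starRingEnd ℂ) (u i) * (μ * u i)
          = μ * ((Complex.normSq (u i) : ℝ) : ℂ) := by
        intro i
        rw [Complex.normSq_eq_conj_mul_self]
        ring
      calc μ * (N : ℂ) = ∑ i, μ * ((Complex.normSq (u i) : ℝ) : ℂ) := by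
            rw [hN]
            push_cast
            rw [Finset.mul_sum]
        _ = ∑ i, (starRingEnd ℂ) (u i) * (μ * u i) :=
            Finset.sum_congr rfl (fun i _ => (hterm i).symm)
        _ = _ := Finset.sum_congr rfl (fun i _ => this i)
    have hconj : (starRingEnd ℂ) (μ * (N : ℂ)) = μ * (N : ℂ) := by
      rw [hS, map_sum]
      rw [Finset.sum_comm]
      refine Finset.sum_congr rfl (fun j _ => ?_)
      rw [map_sum]
      refine Finset.sum_congr rfl (fun i _ => ?_)
      rw [_root_.map_mul, _root_.map_mul, Complex.conj_conj, Complex.conj_ofReal, hMsymm i j]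
      ring
    have hNne : (N : ℂ) ≠ 0 := by exact_mod_cast hNpos.ne'
    have : (starRingEnd ℂ) μ = μ := by
      have := hconj
      rw [_root_.map_mul, Complex.conj_ofReal] at this
      exact mul_right_cancel₀ hNne this
    exact (Complex.conj_eq_iff_im.mp this)
  · -- Gershgorin bounds via t = e3
    set w : Fin n → ℂ := fun j => ((X j ^ e3 : ℝ) : ℂ) * v j with hwdef
    set Mc : Matrix (Fin n) (Fin n) ℂ := (M e3).map Complex.ofReal with hMc
    have heig' : Mc.mulVec w = μ • w := by
      funext i
      simp only [Matrix.mulVec, dotProduct, hMc, Matrix.map_apply, Pi.smul_apply,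
        smul_eq_mul]
      exact hroweq e3 i
    have hμev : Module.End.HasEigenvalue (Matrix.toLin' Mc) μ := by
      refine Module.End.hasEigenvalue_of_hasEigenvector ⟨Module.End.mem_eigenspace_iff.mpr ?_, hw e3⟩
      rw [Matrix.toLin'_apply]
      exact heig'
    obtain ⟨k, hk⟩ := eigenvalue_mem_ball hμev
    rw [Metric.mem_closedBall, Complex.dist_eq] at hk
    -- identify the diagonal entry
    have hdiagM : Mc k k = (C k : ℂ) := by
      rw [hMc, Matrix.map_apply]
      simp [hMc, Matrix.map_apply, hM, hdiag k]
    -- identify the radius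
    have hrad : ∑ j ∈ Finset.univ.erase k, ‖Mc k j‖
        = |m2| * X k ^ (e2 + e3) * d k := by
      have : ∀ j ∈ Finset.univ.erase k, ‖Mc k j‖
          = |m2| * X k ^ (e2 + e3) * A k j := by
        intro j hj
        have hjk : j ≠ k := Finset.ne_of_mem_erase hj
        rw [hMc, Matrix.map_apply]
        simp only [hMc, Matrix.map_apply, hM, if_neg (Ne.symm hjk), zero_add,
          Complex.norm_real]
        rw [Real.norm_eq_abs, abs_mul, abs_mul, abs_mul]
        rw [abs_of_pos (hXt (e2 + e3) k), abs_of_nonneg (hnonneg k j),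
          abs_of_pos (hXt (e3 - e3) j)]
        have : X j ^ (e3 - e3) = 1 := by norm_num
        rw [this]; ring
      rw [Finset.sum_congr rfl this, ← Finset.mul_sum]
      congr 1
      rw [Finset.sum_erase_eq_sub (Finset.mem_univ k), hdiag k, sub_zero]
      rfl
    rw [hdiagM, hrad] at hk
    have habs : |μ.re - C k| ≤ |m2| * X k ^ (e2 + e3) * d k := by
      calc |μ.re - C k| = |(μ - (C k : ℂ)).re| := by simp
        _ ≤ ‖μ - (C k : ℂ)‖ := Complex.abs_re_le_norm _
        _ = ‖μ - (C k : ℂ)‖ := rfl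
        _ ≤ _ := hk
    rw [abs_le] at habs
    constructor
    · refine le_trans (Finset.inf'_le _ (Finset.mem_univ k)) ?_
      have := habs.1
      simp only [hC] at *
      linarith
    · refine le_trans ?_ (Finset.le_sup' _ (Finset.mem_univ k))
      have := habs.2
      simp only [hC] at *
      linarith
end

section
/- Spectral support of the GCN message-passing operator: every eigenvalue λ of D_1^{−1/2}·A_1·D_1^{−1/2}, where A_1 = A + I_n and D_1 is the diagonal matrix with entries d_i + 1, satisfies −(d_max − 1)/(d_max + 1) ≤ λ ≤ 1, where d_max = max_i d_i is the maximum degree. -/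
/-!
Put `w = D₁^{-1/2} v`. Then `λ · wᵀ D₁ w = wᵀ (A + I) w = wᵀ A w + ‖w‖²`, and expanding
`∑ᵢⱼ Aᵢⱼ (wᵢ ± wⱼ)² ≥ 0` with the symmetry of `A` gives `|wᵀ A w| ≤ ∑ᵢ dᵢ wᵢ²`.
The upper sign yields `λ ≤ 1`; the lower one yields `λ · wᵀ D₁ w ≥ ∑ᵢ (1 - dᵢ) wᵢ²`,
and termwise `1 - dᵢ ≥ -(d_max - 1)/(d_max + 1) · (dᵢ + 1)` because `dᵢ ≤ d_max`.
-/

open Matrix BigOperators Finset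

theorem neg_div_mul_le_one_sub {d D : ℝ} (hd : 0 ≤ d) (hdD : d ≤ D) :
    -((D - 1) / (D + 1)) * (d + 1) ≤ 1 - d := by
  have hD : 0 < D + 1 := by linarith
  rw [neg_mul, div_mul_eq_mul_div, neg_le, le_div_iff₀ hD]
  nlinarith

namespace Matrix

variable {ι : Type*} [Fintype ι] {A : Matrix ι ι ℝ}

theorem sum_sum_mul_add_smul_sq (hA : A.IsSymm) (s : ℝ) (w : ι → ℝ) :
    ∑ i, ∑ j, A i j * (w i + s * w j) ^ 2
      = (1 + s ^ 2) * ∑ i, (∑ j, A i j) * w i ^ 2 + 2 * s * (w ⬝ᵥ A *ᵥ w) := by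
  have hswap : ∑ i, ∑ j, A i j * w j ^ 2 = ∑ i, (∑ j, A i j) * w i ^ 2 := by
    rw [sum_comm]
    simp only [sum_mul, hA.apply]
  calc ∑ i, ∑ j, A i j * (w i + s * w j) ^ 2
      = ∑ i, (∑ j, A i j) * w i ^ 2 + s ^ 2 * ∑ i, ∑ j, A i j * w j ^ 2
          + 2 * s * ∑ i, w i * ∑ j, A i j * w j := by
        simp only [mul_sum, sum_mul, ← sum_add_distrib]
        refine sum_congr rfl fun i _ => sum_congr rfl fun j _ => ?_
        ring
    _ = _ := by rw [hswap]; simp only [dotProduct, mulVec]; ring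

theorem abs_dotProduct_mulVec_le (hA : A.IsSymm) (hA0 : ∀ i j, 0 ≤ A i j) (w : ι → ℝ) :
    |w ⬝ᵥ A *ᵥ w| ≤ ∑ i, (∑ j, A i j) * w i ^ 2 := by
  have hsq (s : ℝ) : 0 ≤ ∑ i, ∑ j, A i j * (w i + s * w j) ^ 2 :=
    sum_nonneg fun i _ => sum_nonneg fun j _ => mul_nonneg (hA0 i j) (sq_nonneg _)
  have hplus := sum_sum_mul_add_smul_sq hA 1 w ▸ hsq 1
  have hminus := sum_sum_mul_add_smul_sq hA (-1) w ▸ hsq (-1)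
  rw [abs_le]
  constructor <;> nlinarith

theorem dotProduct_diagonal_mul_mul_diagonal_mulVec [DecidableEq ι] (c : ι → ℝ)
    (B : Matrix ι ι ℝ) (v : ι → ℝ) :
    v ⬝ᵥ (diagonal c * B * diagonal c) *ᵥ v = (c * v) ⬝ᵥ B *ᵥ (c * v) := by
  have hright : diagonal c *ᵥ v = c * v := funext fun i => mulVec_diagonal c v i
  have hleft : v ᵥ* diagonal c = c * v := funext fun i => by
    rw [vecMul_diagonal, Pi.mul_apply, mul_comm]
  rw [← mulVec_mulVec, ← mulVec_mulVec, dotProduct_mulVec, hright, hleft]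

theorem dotProduct_add_one_mulVec [DecidableEq ι] (w : ι → ℝ) :
    w ⬝ᵥ (A + 1) *ᵥ w = w ⬝ᵥ A *ᵥ w + ∑ i, w i ^ 2 := by
  rw [add_mulVec, one_mulVec, dotProduct_add]
  simp only [dotProduct, sq]

theorem dotProduct_add_one_mulVec_le [DecidableEq ι] (hA : A.IsSymm) (hA0 : ∀ i j, 0 ≤ A i j)
    (w : ι → ℝ) : w ⬝ᵥ (A + 1) *ᵥ w ≤ ∑ i, (∑ j, A i j + 1) * w i ^ 2 := by
  have hQ := (abs_le.mp (abs_dotProduct_mulVec_le hA hA0 w)).2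
  simp only [dotProduct_add_one_mulVec, add_mul, one_mul, sum_add_distrib]
  linarith

theorem neg_div_mul_le_dotProduct_add_one_mulVec [DecidableEq ι] (hA : A.IsSymm)
    (hA0 : ∀ i j, 0 ≤ A i j) {D : ℝ} (hD : ∀ i, ∑ j, A i j ≤ D) (w : ι → ℝ) :
    -((D - 1) / (D + 1)) * ∑ i, (∑ j, A i j + 1) * w i ^ 2 ≤ w ⬝ᵥ (A + 1) *ᵥ w := by
  have hQ := (abs_le.mp (abs_dotProduct_mulVec_le hA hA0 w)).1
  have hterm (i : ι) : -((D - 1) / (D + 1)) * ((∑ j, A i j + 1) * w i ^ 2)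
      ≤ (1 - ∑ j, A i j) * w i ^ 2 :=
by
    rw [← mul_assoc]
    exact mul_le_mul_of_nonneg_right
      (neg_div_mul_le_one_sub (sum_nonneg fun j _ => hA0 i j) (hD i)) (sq_nonneg _)
  calc -((D - 1) / (D + 1)) * ∑ i, (∑ j, A i j + 1) * w i ^ 2
      ≤ ∑ i, (1 - ∑ j, A i j) * w i ^ 2 := by
        rw [mul_sum]
        exact sum_le_sum fun i _ => hterm i
    _ = -∑ i, (∑ j, A i j) * w i ^ 2 + ∑ i, w i ^ 2 := by
        simp only [sub_mul, one_mul, sum_sub_distrib]; ring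
    _ ≤ w ⬝ᵥ (A + 1) *ᵥ w := by rw [dotProduct_add_one_mulVec]; linarith

end Matrix

theorem mul_rpow_neg_half_sq {x : ℝ} (hx : 0 < x) : x * (x ^ (-(1 / 2) : ℝ)) ^ 2 = 1 := by
  rw [← Real.rpow_natCast, ← Real.rpow_mul hx.le]
  norm_num [Real.rpow_neg_one, hx.ne']

theorem gcn_operator_spectral_support_general
    (n : ℕ) (hn : 0 < n) (A : Matrix (Fin n) (Fin n) ℝ)
    (hsymm : A.IsSymm) (hnonneg : ∀ i j, 0 ≤ A i j)
    (lam : ℝ) (v : Fin n → ℝ) (hv : v ≠ 0)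
    (heig : (Dpow A 1 (-(1 / 2)) * (A + (1 : Matrix (Fin n) (Fin n) ℝ))
        * Dpow A 1 (-(1 / 2))).mulVec v = lam • v) :
    -((Finset.univ.sup' ⟨⟨0, hn⟩, Finset.mem_univ _⟩ (adjDeg A) - 1)
        / (Finset.univ.sup' ⟨⟨0, hn⟩, Finset.mem_univ _⟩ (adjDeg A) + 1)) ≤ lam ∧
    lam ≤ 1 := by
  have hdeg (i : Fin n) : 0 < adjDeg A i + 1 := by
    have : 0 ≤ adjDeg A i := sum_nonneg fun j _ => hnonneg i j
    linarith
  set w : Fin n → ℝ := fun i => (adjDeg A i + 1) ^ (-(1 / 2) : ℝ) * v i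
  have hrayleigh : lam * (v ⬝ᵥ v) = w ⬝ᵥ (A + 1) *ᵥ w := by
    rw [← smul_eq_mul, ← dotProduct_smul, ← heig]
    exact dotProduct_diagonal_mul_mul_diagonal_mulVec _ _ _
  have hnorm : v ⬝ᵥ v = ∑ i, (adjDeg A i + 1) * w i ^ 2 :=
    sum_congr rfl fun i _ => by
      rw [mul_pow, ← mul_assoc, mul_rpow_neg_half_sq (hdeg i), one_mul, sq]
  have hpos : 0 < v ⬝ᵥ v := by simpa [star_trivial] using dotProduct_self_star_pos_iff.mpr hv
  constructor
  · refine le_of_mul_le_mul_right ?_ hpos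
    rw [hrayleigh, hnorm]
    exact neg_div_mul_le_dotProduct_add_one_mulVec hsymm hnonneg
      (fun i => le_sup' (adjDeg A) (mem_univ i)) w
  · refine le_of_mul_le_mul_right ?_ hpos
    rw [hrayleigh, one_mul, hnorm]
    exact dotProduct_add_one_mulVec_le hsymm hnonneg w

/-- Spectral support of the GCN message-passing operator: every eigenvalue `λ` of
`D_1^{−1/2}·A_1·D_1^{−1/2}` satisfies `−(d_max − 1)/(d_max + 1) ≤ λ ≤ 1`. -/
theorem gcn_operator_spectral_support
    (n : ℕ) (hn : 0 < n) (A : Matrix (Fin n) (Fin n) ℝ)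
    (hsymm : A.IsSymm) (hnonneg : ∀ i j, 0 ≤ A i j) (hdiag : ∀ i, A i i = 0)
    (lam : ℝ) (v : Fin n → ℝ) (hv : v ≠ 0)
    (heig : (Dpow A 1 (-(1 / 2)) * (A + (1 : Matrix (Fin n) (Fin n) ℝ))
        * Dpow A 1 (-(1 / 2))).mulVec v = lam • v) :
    -((Finset.univ.sup' ⟨⟨0, hn⟩, Finset.mem_univ _⟩ (adjDeg A) - 1)
        / (Finset.univ.sup' ⟨⟨0, hn⟩, Finset.mem_univ _⟩ (adjDeg A) + 1)) ≤ lam ∧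
    lam ≤ 1 :=
  gcn_operator_spectral_support_general n hn A hsymm hnonneg lam v hv heig
end
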